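/- Let Ψ ∈ ℂ^{n×n} be the unitary DFT matrix and Φ = [Φ_1ᵀ,…,Φ_ℓᵀ]ᵀ ∈ ℂ^{L×n} a concatenation of circulant matrices Φ_j = Ψ* diag(λ_j) Ψ, whose spectra satisfy λ_j[k] = 0 for all j ∈ [ℓ] and k ∈ [n₀], and Σ_{j=1}^ℓ |λ_j[k]|² > 0 for k ∈ {n₀+1,…,n}, where n₀ < n. Let 𝒢 = {𝒢_1,…,𝒢_n} with 𝒢_k = {(j−1)n+k : j ∈ [ℓ]}. Set T = Φ Ψ* and restrict to the nonzero columns T' = T[e_{n₀+1},…,e_n], T̃' = ((T')†)*, and for any γ > 0 define μ_{𝒢,k} = (n−n₀) γ max_{k'} ‖Π_{𝒢_{k'}} T' e_{k−n₀}‖_2² and μ̃_{𝒢,k} = (n−n₀) γ^{−1} max_{k'} ‖Π_{𝒢_{k'}} T̃' e_{k−n₀}‖_2² for k ∈ {n₀+1,…,n}. Then μ_{𝒢,k} μ̃_{𝒢,k} is the same for all k ∈ {n₀+1,…,n}, and the group variable density sampling distribution P(ω = k) = √(μ_{𝒢,k} μ̃_{𝒢,k})/Σ_{j=n₀+1}^n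 √(μ_{𝒢,j} μ̃_{𝒢,j}) is the uniform distribution on {n₀+1,…,n}. -/

import Mathlib

open scoped BigOperators ENNReal
open Classical MeasureTheory
open scoped Matrix

noncomputable section

namespace TSR

/-- ℓ2 norm of a finite complex vector. -/
def l2norm {d : ℕ} (v : Fin d → ℂ) : ℝ := Real.sqrt (∑ i, ‖v i‖ ^ 2)

/-- ℓ1 norm of a finite complex vector. -/
def l1norm {d : ℕ} (v : Fin d → ℂ) : ℝ := ∑ i, ‖v i‖

/-- ℓ∞ norm of a finite complex vector. -/
def linfnorm {d : ℕ} (v : Fin d → ℂ) : ℝ := ⨆ i, ‖v i‖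

/-- Spectral norm (`ℓ2 → ℓ2` operator norm) of a matrix. -/
def specNorm {d e : ℕ} (A : Matrix (Fin d) (Fin e) ℂ) : ℝ :=
  ‖LinearMap.toContinuousLinearMap (Matrix.toEuclideanLin A)‖

/-- Largest singular value. -/
def sigmaMax {d e : ℕ} (A : Matrix (Fin d) (Fin e) ℂ) : ℝ := specNorm A

/-- Smallest singular value: the infimum of `‖A v‖₂` over unit vectors `v`. -/
def sigmaMin {d e : ℕ} (A : Matrix (Fin d) (Fin e) ℂ) : ℝ :=
  sInf {r : ℝ | ∃ v : Fin e → ℂ, l2norm v = 1 ∧ r = l2norm (A.mulVec v)}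

/-- Maximum ℓ2 norm of the columns of a matrix (the `1 → 2` operator norm). -/
def maxColL2 {d e : ℕ} (A : Matrix (Fin d) (Fin e) ℂ) : ℝ :=
  ⨆ k : Fin e, l2norm (fun i => A i k)

/-- `B` is the Moore–Penrose pseudoinverse of `A` (the four Penrose conditions). -/
def IsMoorePenrose {ι κ : Type*} [Fintype ι] [Fintype κ] [DecidableEq ι] [DecidableEq κ]
    (A : Matrix ι κ ℂ) (B : Matrix κ ι ℂ) : Prop :=
  A * B * A = A ∧ B * A * B = B ∧ (A * B)ᴴ = A * B ∧ (B * A)ᴴ = B * A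

/-- `γ > 0` minimizes `‖γ' T*T − I‖` over `γ' > 0` (the balancing parameter). -/
def IsBalancing {e d : ℕ} (T : Matrix (Fin d) (Fin e) ℂ) (γ : ℝ) : Prop :=
  0 < γ ∧ ∀ γ' : ℝ, 0 < γ' →
    specNorm ((γ : ℂ) • (Tᴴ * T) - 1) ≤ specNorm ((γ' : ℂ) • (Tᴴ * T) - 1)

/-- Local incoherence parameter `n γ ‖A e_k‖_∞²` of the `k`-th column. -/
def locIncoh {e d : ℕ} (γ : ℝ) (A : Matrix (Fin d) (Fin e) ℂ) (k : Fin e) : ℝ :=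
  (e : ℝ) * γ * (linfnorm fun i => A i k) ^ 2

/-- The (worst case) incoherence parameter `μ`. -/
def incoherence {e d : ℕ} (γ : ℝ) (T Ttil : Matrix (Fin d) (Fin e) ℂ) : ℝ :=
  ⨆ k : Fin e, max (locIncoh γ T k) (locIncoh γ⁻¹ Ttil k)

/-- The variable-density weight `√(μ_k μ̃_k)`. -/
def vdWeight {e d : ℕ} (γ : ℝ) (T Ttil : Matrix (Fin d) (Fin e) ℂ) (k : Fin e) : ℝ :=
  Real.sqrt (locIncoh γ T k * locIncoh γ⁻¹ Ttil k)

/-- The average incoherence parameter `μ̄ = (1/n) ∑ √(μ_k μ̃_k)`. -/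
def avgIncoh {e d : ℕ} (γ : ℝ) (T Ttil : Matrix (Fin d) (Fin e) ℂ) : ℝ :=
  (1 / (e : ℝ)) * ∑ k, vdWeight γ T Ttil k

/-- The sampling matrix `S_Ω` of a multiset of indices `ω : Fin m → Fin n`. -/
def sampMat {n m : ℕ} (ω : Fin m → Fin n) : Matrix (Fin m) (Fin n) ℂ :=
  fun j k => if ω j = k then 1 else 0

/-- Coordinate projection `Π_J` onto a set of coordinates, as a matrix. -/
def projMat {d : ℕ} (J : Set (Fin d)) : Matrix (Fin d) (Fin d) ℂ :=
  fun i j => if i = j ∧ i ∈ J then 1 else 0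

/-- Number of non-zero entries. -/
def sparsity {d : ℕ} (v : Fin d → ℂ) : ℕ :=
  (Finset.univ.filter fun i => v i ≠ 0).card

/-- Number of distinct elements of the multiset `Ω` (that is, `|Ω'|`). -/
def distinctCard {n m : ℕ} (ω : Fin m → Fin n) : ℕ :=
  (Finset.image ω Finset.univ).card

/-- Maximal multiplicity of an element of the multiset `Ω`. -/
def maxMult {n m : ℕ} (ω : Fin m → Fin n) : ℕ :=
  Finset.univ.sup fun k : Fin n => (Finset.univ.filter fun j => ω j = k).card

/-- Entrywise complex signum. -/
def csgn {d : ℕ} (z : Fin d → ℂ) : Fin d → ℂ :=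
  fun k => if z k = 0 then 0 else z k / (‖z k‖ : ℂ)

/-- `G` is a partition of the coordinates into disjoint nonempty groups. -/
def IsPartition {L N : ℕ} (G : Fin N → Finset (Fin L)) : Prop :=
  (∀ j, (G j).Nonempty) ∧ (∀ j j', j ≠ j' → Disjoint (G j) (G j')) ∧
    Finset.univ.biUnion G = Finset.univ

/-- The mixed (group) norm `‖z‖_{𝒢,1} = ∑_j ‖Π_{𝒢_j} z‖₂`. -/
def mixedNorm {L N : ℕ} (G : Fin N → Finset (Fin L)) (z : Fin L → ℂ) : ℝ :=
  ∑ j, Real.sqrt (∑ i ∈ G j, ‖z i‖ ^ 2)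

/-- `z` is `(s,t)` strongly group sparse with respect to the partition `G`. -/
def StronglyGroupSparse {L N : ℕ} (G : Fin N → Finset (Fin L)) (s t : ℕ)
    (z : Fin L → ℂ) : Prop :=
  ∃ J : Finset (Fin N), (∀ i, z i ≠ 0 → i ∈ J.biUnion G) ∧
    (J.biUnion G).card ≤ t ∧ J.card ≤ s

/-- Group local incoherence `max_j n γ ‖Π_{𝒢_j} A e_k‖₂²`. -/
def groupLocIncoh {n L N : ℕ} (G : Fin N → Finset (Fin L)) (γ : ℝ)
    (A : Matrix (Fin L) (Fin n) ℂ) (k : Fin n) : ℝ :=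
  ⨆ j : Fin N, (n : ℝ) * γ * ∑ i ∈ G j, ‖A i k‖ ^ 2

/-- Group incoherence parameter `μ_𝒢`. -/
def groupIncoh {n L N : ℕ} (G : Fin N → Finset (Fin L)) (γ : ℝ)
    (T Ttil : Matrix (Fin L) (Fin n) ℂ) : ℝ :=
  ⨆ k : Fin n, max (groupLocIncoh G γ T k) (groupLocIncoh G γ⁻¹ Ttil k)

/-- Group variable density weight `√(μ_{𝒢,k} μ̃_{𝒢,k})`. -/
def groupVdWeight {n L N : ℕ} (G : Fin N → Finset (Fin L)) (γ : ℝ)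
    (T Ttil : Matrix (Fin L) (Fin n) ℂ) (k : Fin n) : ℝ :=
  Real.sqrt (groupLocIncoh G γ T k * groupLocIncoh G γ⁻¹ Ttil k)

/-- Group average incoherence `μ̄_𝒢`. -/
def groupAvgIncoh {n L N : ℕ} (G : Fin N → Finset (Fin L)) (γ : ℝ)
    (T Ttil : Matrix (Fin L) (Fin n) ℂ) : ℝ :=
  (1 / (n : ℝ)) * ∑ k, groupVdWeight G γ T Ttil k

/-- The unitary DFT matrix. -/
def dft (n : ℕ) : Matrix (Fin n) (Fin n) ℂ :=
  fun j k => ((1 / Real.sqrt n : ℝ) : ℂ) *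
    Complex.exp (-(2 * Real.pi * Complex.I * (j : ℕ) * (k : ℕ)) / n)

end TSR

/-!
Since `Ψ` is unitary, `T = ΦΨ*` is the block column `[Ψ* diag(λ_j)]_j`, so the columns of `T'`
are orthogonal with `‖T' e_k‖² = S_k := ∑_j |λ_j[k]|²`. Hence `T'† = diag(S)⁻¹ T'*`, i.e. the
columns of `T̃'` are those of `T'` divided by `S_k`. Every entry of `Ψ` has modulus `n^{-1/2}`, so
each group carries the same share `1/n` of the energy of a column:
`μ_{𝒢,k} = (n - n₀) γ S_k / n` and `μ̃_{𝒢,k} = (n - n₀) γ⁻¹ S_k⁻¹ / n`, whose product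
`((n - n₀) / n)²` does not depend on `k`.
-/

theorem IsPrimitiveRoot.sum_pow_mul_inv_pow {K : Type*} [Field K] {ζ : K} {n : ℕ}
    (hζ : IsPrimitiveRoot ζ n) (j k : Fin n) :
    ∑ p : Fin n, ζ ^ ((j : ℕ) * p) * (ζ ^ ((k : ℕ) * p))⁻¹ = if j = k then (n : K) else 0 := by
  have hζ0 : ζ ≠ 0 := hζ.ne_zero (Fin.pos j).ne'
  set r := ζ ^ (j : ℕ) / ζ ^ (k : ℕ)
  have hterm : ∀ p : Fin n, ζ ^ ((j : ℕ) * p) * (ζ ^ ((k : ℕ) * p))⁻¹ = r ^ (p : ℕ) := by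
    intro p
    rw [div_pow, ← pow_mul, ← pow_mul, div_eq_mul_inv]
  simp only [hterm, Fin.sum_univ_eq_sum_range (r ^ ·)]
  split_ifs with hjk
  · simp [r, hjk, hζ0]
  · have hr1 : r ≠ 1 := fun h ↦
      hjk (Fin.ext (hζ.pow_inj j.2 k.2 (div_eq_one_iff_eq (pow_ne_zero _ hζ0) |>.mp h)))
    have hrn : r ^ n = 1 := by
      rw [div_pow, ← pow_mul, ← pow_mul, mul_comm, pow_mul, mul_comm, pow_mul, hζ.pow_eq_one,
        one_pow, one_pow, div_one]
    rw [geom_sum_eq hr1, hrn, sub_self, zero_div]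

theorem Matrix.submatrix_mul_conjTranspose_submatrix {α κ κ' μ : Type*} [Semiring α] [StarRing α]
    [Fintype κ'] [DecidableEq κ] [DecidableEq μ] {M : Matrix κ κ' α} (hM : M * Mᴴ = 1)
    {σ : μ → κ} (hσ : Function.Injective σ) :
    M.submatrix σ id * (M.submatrix σ id)ᴴ = 1 := by
  rw [Matrix.conjTranspose_submatrix, ← Matrix.submatrix_mul _ _ _ _ _ Function.bijective_id, hM,
    Matrix.submatrix_one _ hσ]

namespace TSR

theorem dft_apply {n : ℕ} (j k : Fin n) :
    dft n j k = (Real.sqrt n : ℂ)⁻¹ *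
      (Complex.exp (2 * Real.pi * Complex.I / n) ^ ((j : ℕ) * k))⁻¹ := by
  rw [dft, ← Complex.exp_nat_mul, ← Complex.exp_neg]
  push_cast
  ring_nf

theorem dft_mul_conjTranspose (n : ℕ) : dft n * (dft n)ᴴ = 1 := by
  rcases Nat.eq_zero_or_pos n with rfl | hn
  · exact Subsingleton.elim _ _
  set ω := Complex.exp (2 * Real.pi * Complex.I / n)
  have hω : IsPrimitiveRoot ω n := Complex.isPrimitiveRoot_exp n hn.ne'
  have hω1 : ∀ m : ℕ, ‖ω ^ m‖ = 1 := fun m ↦ by rw [norm_pow, hω.norm'_eq_one hn.ne', one_pow]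
  have hs : (Real.sqrt n : ℂ)⁻¹ * (Real.sqrt n : ℂ)⁻¹ = (n : ℂ)⁻¹ := by
    rw [← mul_inv, ← Complex.ofReal_mul, Real.mul_self_sqrt n.cast_nonneg, Complex.ofReal_natCast]
  ext j k
  have hterm : ∀ p : Fin n,
      dft n j p * (dft n)ᴴ p k = (n : ℂ)⁻¹ * (ω ^ ((k : ℕ) * p) * (ω ^ ((j : ℕ) * p))⁻¹) := by
    intro p
    rw [Matrix.conjTranspose_apply, dft_apply, dft_apply, star_mul', star_inv₀, star_inv₀,
      Complex.star_def, ← Complex.inv_eq_conj (hω1 _), inv_inv, Complex.conj_ofReal,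
      mul_comm j.val, mul_comm k.val, ← hs]
    ring
  rw [Matrix.mul_apply, Finset.sum_congr rfl fun p _ ↦ hterm p, ← Finset.mul_sum,
    hω.sum_pow_mul_inv_pow, Matrix.one_apply]
  rcases eq_or_ne j k with rfl | hjk
  · simp [hn.ne']
  · simp [hjk, hjk.symm]

theorem norm_dft_sq {n : ℕ} (j k : Fin n) : ‖dft n j k‖ ^ 2 = (n : ℝ)⁻¹ := by
  have hω := Complex.isPrimitiveRoot_exp n (Fin.pos j).ne'
  rw [dft_apply, norm_mul, norm_inv, norm_inv, norm_pow, hω.norm'_eq_one (Fin.pos j).ne']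
  simp [Real.sq_sqrt]

section MoorePenrose

variable {ι κ : Type*} [Fintype ι] [Fintype κ] [DecidableEq ι] [DecidableEq κ]
  {A : Matrix ι κ ℂ} {B C : Matrix κ ι ℂ}

theorem IsMoorePenrose.unique (hB : IsMoorePenrose A B) (hC : IsMoorePenrose A C) : B = C := by
  obtain ⟨hB1, hB2, hB3, hB4⟩ := hB
  obtain ⟨hC1, hC2, hC3, hC4⟩ := hC
  have hBAC : B = B * A * C := calc
    B = B * (A * B)ᴴ := by rw [hB3, ← Matrix.mul_assoc, hB2]
    _ = B * ((A * C * A) * B)ᴴ := by rw [hC1]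
    _ = B * ((A * B)ᴴ * (A * C)ᴴ) := by
      rw [← Matrix.conjTranspose_mul]; simp only [Matrix.mul_assoc]
    _ = B * A * B * A * C := by rw [hB3, hC3]; simp only [Matrix.mul_assoc]
    _ = B * A * C := by rw [hB2]
  have hCBA : C = B * A * C := calc
    C = (C * A)ᴴ * C := by rw [hC4, hC2]
    _ = (C * (A * B * A))ᴴ * C := by rw [hB1]
    _ = (B * A)ᴴ * (C * A)ᴴ * C := by
      rw [← Matrix.conjTranspose_mul]; simp only [Matrix.mul_assoc]
    _ = B * A * (C * A * C) := by rw [hB4, hC4]; simp only [Matrix.mul_assoc]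
    _ = B * A * C := by rw [hC2]
  rw [hBAC, ← hCBA]

theorem isMoorePenrose_of_mul_eq_one (hBA : B * A = 1) (hAB : (A * B)ᴴ = A * B) :
    IsMoorePenrose A B :=
  ⟨by rw [Matrix.mul_assoc, hBA, Matrix.mul_one], by rw [hBA, Matrix.one_mul], hAB,
    by rw [hBA, Matrix.conjTranspose_one]⟩

theorem IsMoorePenrose.conjTranspose_eq_mul_diagonal_inv (hB : IsMoorePenrose A B) {d : κ → ℝ}
    (hd : ∀ k, d k ≠ 0) (hA : Aᴴ * A = Matrix.diagonal fun k ↦ (d k : ℂ)) :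
    Bᴴ = A * Matrix.diagonal fun k ↦ ((d k)⁻¹ : ℂ) := by
  set D : Matrix κ κ ℂ := Matrix.diagonal fun k ↦ ((d k)⁻¹ : ℂ)
  have hD : Dᴴ = D := by
    rw [Matrix.diagonal_conjTranspose]
    congr 1
    ext k
    simp
  have hDA : D * Aᴴ * A = 1 := by
    rw [Matrix.mul_assoc, hA, Matrix.diagonal_mul_diagonal, ← Matrix.diagonal_one]
    congr 1
    ext k
    exact inv_mul_cancel₀ (by exact_mod_cast hd k)
  have hHerm : (A * (D * Aᴴ))ᴴ = A * (D * Aᴴ) := by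
    rw [Matrix.conjTranspose_mul, Matrix.conjTranspose_mul, hD, Matrix.conjTranspose_conjTranspose,
      Matrix.mul_assoc]
  rw [hB.unique (isMoorePenrose_of_mul_eq_one hDA hHerm), Matrix.conjTranspose_mul,
    Matrix.conjTranspose_conjTranspose, hD]

end MoorePenrose

section SpectralStack

variable {ι κ μ : Type*} [Fintype ι]

/-- The block column `[Uᴴ * diagonal (c j)]_j`. -/
def spectralStack (U : Matrix μ κ ℂ) (c : ι → μ → ℂ) : Matrix (ι × κ) μ ℂ :=
  Matrix.of fun p k ↦ star (U k p.2) * c p.1 k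

theorem conjTranspose_mul_spectralStack [Fintype κ] [DecidableEq μ] {U : Matrix μ κ ℂ}
    (hU : U * Uᴴ = 1) (c : ι → μ → ℂ) :
    (spectralStack U c)ᴴ * spectralStack U c =
      Matrix.diagonal fun k ↦ ((∑ j, ‖c j k‖ ^ 2 : ℝ) : ℂ) := by
  ext k k'
  have hblock : ∀ j, ∑ p, star (star (U k p) * c j k) * (star (U k' p) * c j k') =
      (U * Uᴴ) k k' * (star (c j k) * c j k') := fun j ↦ by
    rw [Matrix.mul_apply, Finset.sum_mul]
    refine Finset.sum_congr rfl fun p _ ↦ ?_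
    simp only [Matrix.conjTranspose_apply, star_mul', star_star]
    ring
  rw [Matrix.mul_apply, Fintype.sum_prod_type]
  simp only [Matrix.conjTranspose_apply, spectralStack, Matrix.of_apply, hblock, hU,
    Matrix.one_apply, Matrix.diagonal_apply]
  split_ifs with hkk
  · subst hkk
    push_cast
    simp [RCLike.star_def, RCLike.conj_mul]
  · simp

theorem sum_norm_sq_spectralStack_apply {U : Matrix μ κ ℂ} {r : ℝ}
    (hU : ∀ k p, ‖U k p‖ ^ 2 = r) (c : ι → μ → ℂ) (p : κ) (k : μ) :
    ∑ j, ‖spectralStack U c (j, p) k‖ ^ 2 = r * ∑ j, ‖c j k‖ ^ 2 := by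
  simp only [spectralStack, Matrix.of_apply, norm_mul, norm_star, mul_pow, hU, Finset.mul_sum]

theorem IsMoorePenrose.sum_norm_sq_conjTranspose_spectralStack_apply [Fintype κ] [Fintype μ]
    [DecidableEq ι] [DecidableEq κ] [DecidableEq μ] {U : Matrix μ κ ℂ} (hU : U * Uᴴ = 1) {r : ℝ}
    (hUr : ∀ k p, ‖U k p‖ ^ 2 = r) {c : ι → μ → ℂ} (hc : ∀ k, ∑ j, ‖c j k‖ ^ 2 ≠ 0)
    {B : Matrix μ (ι × κ) ℂ} (hB : IsMoorePenrose (spectralStack U c) B) (p : κ) (k : μ) :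
    ∑ j, ‖Bᴴ (j, p) k‖ ^ 2 = r * (∑ j, ‖c j k‖ ^ 2)⁻¹ := by
  rw [hB.conjTranspose_eq_mul_diagonal_inv hc (conjTranspose_mul_spectralStack hU c)]
  simp only [Matrix.mul_diagonal, norm_mul, mul_pow, ← Finset.sum_mul,
    sum_norm_sq_spectralStack_apply hUr, norm_inv, Complex.norm_real, Real.norm_eq_abs, inv_pow,
    sq_abs]
  field_simp [hc k]

end SpectralStack

/-- The groups `𝒢_k = {(j−1)n + k : j ∈ [ℓ]}` are encoded as `{(j, k) : j ∈ Fin ℓ}` via the index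
identification `Fin ℓ × Fin n ≃ Fin (ℓ n)`. -/
theorem circulant_union_noninjective_uniform_density
    (n n₀ l : ℕ) (hlt : n₀ < n) (γ : ℝ) (hγ : 0 < γ)
    (lb : Fin l → Fin n → ℂ)
    (hnz : ∀ k : Fin n, n₀ ≤ (k : ℕ) → 0 < ∑ j, ‖lb j k‖ ^ 2)
    (T : Matrix (Fin l × Fin n) (Fin n) ℂ)
    (hT : T = fun p k =>
      (((dft n)ᴴ * Matrix.diagonal (lb p.1) * dft n) * (dft n)ᴴ) p.2 k)
    (T' : Matrix (Fin l × Fin n) (Fin (n - n₀)) ℂ)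
    (hT' : ∀ (p : Fin l × Fin n) (k : Fin (n - n₀)),
      T' p k = T p ⟨n₀ + (k : ℕ), by have := k.2; omega⟩)
    (Tdag' : Matrix (Fin (n - n₀)) (Fin l × Fin n) ℂ)
    (hTdag' : IsMoorePenrose T' Tdag') :
    (∀ k k' : Fin (n - n₀),
        (((n - n₀ : ℕ) : ℝ) * γ * ⨆ k₁ : Fin n, ∑ j : Fin l, ‖T' (j, k₁) k‖ ^ 2) *
          (((n - n₀ : ℕ) : ℝ) * γ⁻¹ * ⨆ k₁ : Fin n, ∑ j : Fin l, ‖Tdag'ᴴ (j, k₁) k‖ ^ 2) =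
        (((n - n₀ : ℕ) : ℝ) * γ * ⨆ k₁ : Fin n, ∑ j : Fin l, ‖T' (j, k₁) k'‖ ^ 2) *
          (((n - n₀ : ℕ) : ℝ) * γ⁻¹ * ⨆ k₁ : Fin n, ∑ j : Fin l, ‖Tdag'ᴴ (j, k₁) k'‖ ^ 2)) ∧
    (∀ k : Fin (n - n₀),
        Real.sqrt ((((n - n₀ : ℕ) : ℝ) * γ * ⨆ k₁ : Fin n, ∑ j : Fin l, ‖T' (j, k₁) k‖ ^ 2) *
            (((n - n₀ : ℕ) : ℝ) * γ⁻¹ * ⨆ k₁ : Fin n, ∑ j : Fin l, ‖Tdag'ᴴ (j, k₁) k‖ ^ 2)) /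
          (∑ k₂ : Fin (n - n₀),
            Real.sqrt
              ((((n - n₀ : ℕ) : ℝ) * γ * ⨆ k₁ : Fin n, ∑ j : Fin l, ‖T' (j, k₁) k₂‖ ^ 2) *
                (((n - n₀ : ℕ) : ℝ) * γ⁻¹ *
                  ⨆ k₁ : Fin n, ∑ j : Fin l, ‖Tdag'ᴴ (j, k₁) k₂‖ ^ 2))) =
          1 / ((n - n₀ : ℕ) : ℝ)) := by
  have : Nonempty (Fin n) := ⟨⟨0, by omega⟩⟩
  let σ : Fin (n - n₀) → Fin n := fun k ↦ ⟨n₀ + k, by omega⟩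
  have hσ : Function.Injective σ := fun k k' h ↦ Fin.ext (by simpa [σ] using h)
  have hU := Matrix.submatrix_mul_conjTranspose_submatrix (dft_mul_conjTranspose n) hσ
  have hUr : ∀ k p, ‖(dft n).submatrix σ id k p‖ ^ 2 = (n : ℝ)⁻¹ := fun k p ↦ norm_dft_sq _ _
  have hS : ∀ k, ∑ j, ‖lb j (σ k)‖ ^ 2 ≠ 0 := fun k ↦ (hnz (σ k) (Nat.le_add_right n₀ k)).ne'
  have hT'_eq : T' = spectralStack ((dft n).submatrix σ id) fun j ↦ lb j ∘ σ := by
    ext p k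
    simp [hT', hT, spectralStack, Matrix.mul_assoc, dft_mul_conjTranspose, Matrix.mul_diagonal, σ]
  rw [hT'_eq] at hTdag'
  have hweight : ∀ k : Fin (n - n₀),
      (((n - n₀ : ℕ) : ℝ) * γ * ⨆ k₁ : Fin n, ∑ j : Fin l, ‖T' (j, k₁) k‖ ^ 2) *
        (((n - n₀ : ℕ) : ℝ) * γ⁻¹ * ⨆ k₁ : Fin n, ∑ j : Fin l, ‖Tdag'ᴴ (j, k₁) k‖ ^ 2) =
        (((n - n₀ : ℕ) : ℝ) / n) ^ 2 := fun k ↦ by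
    simp only [hT'_eq, sum_norm_sq_spectralStack_apply hUr,
      hTdag'.sum_norm_sq_conjTranspose_spectralStack_apply hU hUr hS, ciSup_const,
      Function.comp_apply]
    field_simp [hS k]
  refine ⟨fun k k' ↦ by rw [hweight, hweight], fun k ↦ ?_⟩
  have hn : (n : ℝ) ≠ 0 := Nat.cast_ne_zero.2 (by omega)
  simp only [hweight, Real.sqrt_sq (by positivity : (0 : ℝ) ≤ ((n - n₀ : ℕ) : ℝ) / n),
    Finset.sum_const, Finset.card_univ, Fintype.card_fin, nsmul_eq_mul]
  field_simp

end TSR
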